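/- Let T be a directed tree. If there exists a family λ = {λ_v}_{v∈V°} of nonzero complex numbers such that the weighted shift S_λ has dense domain in ℓ²(V) and D(S_λ²) = {0}, then the set Chi(u) of children of u is countably infinite for every u ∈ V. -/

import Mathlib

open scoped ENNReal NNReal Classical

noncomputable section

/-- A directed tree: a directed graph with nonempty vertex set in which each vertex has
at most one parent, there are no circuits, and the underlying undirected graph is
connected and has no cycles (i.e. is a tree). -/
structure DirectedTree (V : Type) where
  edge : V → V → Prop
  nonempty : Nonempty V
  antisymm : ∀ u v : V, edge u v → ¬ edge v u
  parent_unique : ∀ u v w : V, edge u w → edge v w → u = v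
  isTree : (SimpleGraph.fromRel edge).IsTree

namespace DirectedTree

variable {V : Type} (T : DirectedTree V)

/-- The set of children of a vertex. -/
def chi (u : V) : Set V := {v | T.edge u v}

/-- `v` has a parent. -/
def HasParent (v : V) : Prop := ∃ u, T.edge u v

/-- `V⁰`: the set of non-root vertices, i.e. the vertices possessing a parent. -/
def Vcirc : Set V := {v | T.HasParent v}

/-- The tree is leafless if every vertex has a child. -/
def Leafless : Prop := ∀ u : V, (T.chi u).Nonempty

/-- The parent of a vertex (junk value if the vertex is a root). -/
def par (v : V) : V := if h : T.HasParent v then h.choose else T.nonempty.some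

/-- The set of descendants of a vertex. -/
def desc (u : V) : Set V := {w | Relation.ReflTransGen T.edge u w}

/-- The formal weighted shift map `Λ_T` acting on all complex functions on `V`. -/
def Lam (lam : V → ℂ) (f : V → ℂ) : V → ℂ :=
  fun v => if T.HasParent v then lam v * f (T.par v) else 0

/-- The domain of the weighted shift `S_λ`. -/
def domain (lam : V → ℂ) : Set (lp (fun _ : V => ℂ) 2) :=
  {f | Memℓp (T.Lam lam ⇑f) 2}

/-- The weighted shift `S_λ` (extended by `0` outside its domain). -/
def shift (lam : V → ℂ) (f : lp (fun _ : V => ℂ) 2) : lp (fun _ : V => ℂ) 2 :=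
  if h : f ∈ T.domain lam then (⟨T.Lam lam ⇑f, h⟩ : lp (fun _ : V => ℂ) 2) else 0

/-- The domain of `S_λ²`. -/
def squareDomain (lam : V → ℂ) : Set (lp (fun _ : V => ℂ) 2) :=
  {f | f ∈ T.domain lam ∧ T.shift lam f ∈ T.domain lam}

/-- The domain of the adjoint `S_λ*`. -/
def adjDomain (lam : V → ℂ) : Set (lp (fun _ : V => ℂ) 2) :=
  {g | ∃ h : lp (fun _ : V => ℂ) 2,
    ∀ f ∈ T.domain lam, (inner ℂ (T.shift lam f) g : ℂ) = inner ℂ f h}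

/-- `S_λ` is hyponormal: it is densely defined, `D(S_λ) ⊆ D(S_λ*)` and
`‖S_λ* f‖ ≤ ‖S_λ f‖` for every `f ∈ D(S_λ)` (the adjoint value at `f` being any vector
`h` satisfying `⟪S_λ g, f⟫ = ⟪g, h⟫` for all `g ∈ D(S_λ)`; it is unique by density). -/
def IsHyponormal (lam : V → ℂ) : Prop :=
  Dense (T.domain lam) ∧ T.domain lam ⊆ T.adjDomain lam ∧
    ∀ f ∈ T.domain lam, ∀ h : lp (fun _ : V => ℂ) 2,
      (∀ g ∈ T.domain lam, (inner ℂ (T.shift lam g) f : ℂ) = inner ℂ g h) →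
        ‖h‖ ≤ ‖T.shift lam f‖

/-- `ζ_u = (Σ_{v ∈ Chi(u)} |λ_v|²)^{1/2} ∈ [0,∞]`. -/
def zeta (lam : V → ℂ) (u : V) : ℝ≥0∞ :=
  (∑' v : T.chi u, ((‖lam (v : V)‖₊ : ℝ≥0∞)) ^ 2) ^ (1/2 : ℝ)

end DirectedTree


/-!
The key objects are the columns `S_λ e_u = Σ_{v ∈ Chi(u)} λ_v e_v`. Density of `D(S_λ)` gives
some `f ∈ D(S_λ)` with `f u ≠ 0`, and `S_λ f` restricted to `Chi(u)` is `f u` times the column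
at `u`, so every column is square-summable. A square-summable family of nonzero weights has
countable support, whence `Chi(u)` is countable. Every finitely supported vector then lies in
`D(S_λ)`, being mapped to a finite combination of columns; so if `Chi(u)` were finite, `S_λ e_u`
would be finitely supported and the nonzero vector `e_u` would lie in `D(S_λ²) = {0}`.
-/

theorem Dense.exists_mem_lp_apply_ne_zero {α : Type*} {E : α → Type*}
    [∀ i, NormedAddCommGroup (E i)] {p : ℝ≥0∞} [Fact (1 ≤ p)] {s : Set (lp E p)}
    (hs : Dense s) (a : α) [Nontrivial (E a)] : ∃ f ∈ s, f a ≠ 0 := by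
  obtain ⟨x, hx⟩ := exists_ne (0 : E a)
  refine hs.exists_mem_open (U := {f : lp E p | f a ≠ 0}) ?_ ⟨lp.single p a x, ?_⟩
  · exact isOpen_ne_fun ((continuous_apply a).comp lp.uniformContinuous_coe.continuous)
      continuous_const
  · rwa [Set.mem_ofPred_eq, lp.single_apply_self]

theorem Memℓp.countable_support {α : Type*} {E : α → Type*} [∀ i, NormedAddCommGroup (E i)]
    {p : ℝ≥0∞} (hp : 0 < p.toReal) {f : ∀ i, E i} (hf : Memℓp f p) :
    {i | f i ≠ 0}.Countable := by
  simpa [Function.support, hp.ne'] using (hf.summable hp).countable_support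

namespace DirectedTree

variable {V : Type} (T : DirectedTree V)

lemma edge_par {v : V} (h : T.HasParent v) : T.edge (T.par v) v := by
  rw [par, dif_pos h]
  exact h.choose_spec

lemma par_eq_of_edge {u v : V} (e : T.edge u v) : T.par v = u :=
  T.parent_unique _ _ _ (T.edge_par ⟨u, e⟩) e

lemma Lam_apply_of_edge (lam g : V → ℂ) {u v : V} (e : T.edge u v) :
    T.Lam lam g v = lam v * g u := by
  rw [Lam, if_pos ⟨u, e⟩, T.par_eq_of_edge e]

lemma Lam_eq_sum_mul_indicator (lam g : V → ℂ) (s : Finset V) (hg : ∀ w ∉ s, g w = 0) :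
    T.Lam lam g = fun v => ∑ w ∈ s, g w * (T.chi w).indicator lam v := by
  ext v
  by_cases hv : T.HasParent v
  · have hpar := T.edge_par hv
    rw [T.Lam_apply_of_edge lam g hpar]
    by_cases hs : T.par v ∈ s
    · rw [Finset.sum_eq_single_of_mem _ hs fun w _ hw => ?_]
      · simp [Set.indicator_of_mem (show v ∈ T.chi (T.par v) from hpar), mul_comm]
      · have hvw : v ∉ T.chi w := fun hvw => hw (T.parent_unique _ _ _ hvw hpar)
        simp [Set.indicator_of_notMem hvw]
    · rw [hg _ hs, mul_zero, Finset.sum_eq_zero fun w hw => ?_]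
      have hvw : v ∉ T.chi w := fun hvw => hs (T.parent_unique _ _ _ hpar hvw ▸ hw)
      simp [Set.indicator_of_notMem hvw]
  · rw [Lam, if_neg hv, Finset.sum_eq_zero fun w _ => ?_]
    have hvw : v ∉ T.chi w := fun hvw => hv ⟨w, hvw⟩
    simp [Set.indicator_of_notMem hvw]

lemma Lam_single (lam : V → ℂ) (u : V) :
    T.Lam lam (Pi.single u 1) = (T.chi u).indicator lam := by
  rw [T.Lam_eq_sum_mul_indicator lam _ {u} fun w hw => Pi.single_eq_of_ne
    (Finset.notMem_singleton.mp hw) _]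
  simp

variable {T}

lemma memℓp_Lam_of_finset {lam : V → ℂ} (hcol : ∀ u, Memℓp ((T.chi u).indicator lam) 2)
    {g : V → ℂ} (s : Finset V) (hg : ∀ w ∉ s, g w = 0) : Memℓp (T.Lam lam g) 2 := by
  rw [T.Lam_eq_sum_mul_indicator lam g s hg]
  exact Memℓp.finsetSum s fun w _ => (hcol w).const_mul (g w)

lemma memℓp_indicator_chi_of_dense {lam : V → ℂ} (hd : Dense (T.domain lam)) (u : V) :
    Memℓp ((T.chi u).indicator lam) 2 := by
  obtain ⟨f, hf, hfu⟩ := hd.exists_mem_lp_apply_ne_zero u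
  have hcol_eq : (T.chi u).indicator lam = (f u)⁻¹ • (T.chi u).indicator (T.Lam lam f) := by
    ext v
    by_cases hv : v ∈ T.chi u
    · rw [Set.indicator_of_mem hv, Pi.smul_apply, Set.indicator_of_mem hv,
        T.Lam_apply_of_edge lam f hv, smul_eq_mul, mul_comm, mul_inv_cancel_right₀ hfu]
    · simp [Set.indicator_of_notMem hv]
  rw [hcol_eq]
  exact (Memℓp.mono' hf fun v => norm_indicator_le_norm_self _ v).const_smul _

lemma chi_countable_of_memℓp {lam : V → ℂ} (hne : ∀ v ∈ T.Vcirc, lam v ≠ 0) {u : V}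
    (hcol : Memℓp ((T.chi u).indicator lam) 2) : (T.chi u).Countable := by
  have hsupp : {v | (T.chi u).indicator lam v ≠ 0} = T.chi u := by
    ext v
    simp only [Set.mem_ofPred_eq, Set.indicator_apply_ne_zero, Set.mem_inter_iff,
      Function.mem_support, and_iff_left_iff_imp]
    exact fun hv => hne v ⟨u, hv⟩
  exact hsupp ▸ hcol.countable_support (by norm_num)

lemma chi_infinite_of_squareDomain_eq_zero {lam : V → ℂ} (hcol : ∀ u, Memℓp ((T.chi u).indicator lam) 2)
    (hsq : T.squareDomain lam = {0}) (u : V) : (T.chi u).Infinite := by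
  intro hfin
  set e : lp (fun _ : V => ℂ) 2 := lp.single 2 u 1
  have hLe : T.Lam lam e = (T.chi u).indicator lam := T.Lam_single lam u
  have he : e ∈ T.domain lam := by
    change Memℓp (T.Lam lam e) 2
    exact hLe ▸ hcol u
  have hSe : ⇑(T.shift lam e) = (T.chi u).indicator lam := by
    rw [shift, dif_pos he]
    exact hLe
  have hSe_mem : T.shift lam e ∈ T.domain lam := by
    change Memℓp (T.Lam lam (T.shift lam e)) 2
    refine memℓp_Lam_of_finset hcol hfin.toFinset fun w hw => ?_
    rw [hSe, Set.indicator_of_notMem (fun h => hw (hfin.mem_toFinset.mpr h))]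
  have he0 : e ∈ T.squareDomain lam := ⟨he, hSe_mem⟩
  rw [hsq, Set.mem_singleton_iff] at he0
  simpa [e] using congrArg (fun f : lp (fun _ : V => ℂ) 2 => f u) he0

end DirectedTree

/-- Theorem 3.1, (i) ⇒ (ii): if there is a family of nonzero weights making `S_λ`
densely defined with `D(S_λ²) = {0}`, then every vertex has countably infinitely
many children. -/
theorem stmt7 {V : Type} (T : DirectedTree V)
    (h : ∃ lam : V → ℂ, (∀ v ∈ T.Vcirc, lam v ≠ 0) ∧ Dense (T.domain lam) ∧
      T.squareDomain lam = ({0} : Set (lp (fun _ : V => ℂ) 2))) :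
    ∀ u : V, (T.chi u).Countable ∧ (T.chi u).Infinite := by
  obtain ⟨lam, hne, hd, hsq⟩ := h
  have hcol := fun u => DirectedTree.memℓp_indicator_chi_of_dense hd u
  exact fun u => ⟨DirectedTree.chi_countable_of_memℓp hne (hcol u),
    DirectedTree.chi_infinite_of_squareDomain_eq_zero hcol hsq u⟩
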